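/- arXiv:1604.08921 — 5 statements merged into one kernel-verified Lean document; each statement's English description precedes it below -/
import Mathlib

section
/- At a positive equilibrium (N_i, A_i), the determinant of the Jacobian equals A_i (2a A_i + b), where a = β1 r_A/K_A and b = l_A(β1^th - β1) are the coefficients of the equilibrium quadratic. -/
theorem jacobian_det_formula
    (rN μN β1 rA KA β3 μA εA : ℝ)
    (hrN : 0 < rN) (hμN : 0 < μN) (hβ1 : 0 < β1) (hrA : 0 < rA)
    (hKA : 0 < KA) (hβ3 : 0 < β3) (hμA : 0 < μA) (hεA : 0 < εA)
    (lA β1th β3th a b c : ℝ)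
    (hlA : lA = rA - (μA + εA)) (hlApos : 0 < lA)
    (hβ1th : β1th = μN * rA / (lA * KA))
    (hβ3th : β3th = μN * lA / rN)
    (ha : a = β1 * rA / KA)
    (hb : b = lA * (β1th - β1))
    (hc : c = rN * (β3 - β3th))
    (N A : ℝ) (hN : 0 < N) (hA : 0 < A)
    (hroot : a * A ^ 2 + b * A + c = 0)
    (heq : lA - (rA / KA) * A - β3 * N = 0) :
    (-β1 * A - μN) * (-(rA / KA) * A)
      - (-(β1 / β3) * (lA - (rA / KA) * A)) * (-β3 * A)
      = A * (2 * a * A + b) := by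
  subst hlA hβ1th ha hb
  have hKA0 : KA ≠ 0 := ne_of_gt hKA
  have hβ30 : β3 ≠ 0 := ne_of_gt hβ3
  have hlA0 : rA - (μA + εA) ≠ 0 := ne_of_gt hlApos
  field_simp
  ring
end

section
/- If β3 > β3^th (so c > 0) and β1 > β1^th + 2η + 2√(η(β1^th + η)) where η = r_A r_N (β3 - β3^th)/(K_A l_A²), then the quadratic a A² + b A + c = 0 (with a = β1 r_A/K_A, b = l_A(β1^th - β1), c = r_N(β3 - β3^th)) has two distinct positive real roots. -/
/-! With `a, c > 0` and `b < 0` both roots of `a x² + b x + c` are positive (their product `c / a`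
and sum `-b / a` are), so only `discrim a b c > 0` is needed. Since `a c = η β₁ l_A²`, the
discriminant is `l_A² ((β₁ - β₁ᵗʰ)² - 4 η β₁) = l_A² ((β₁ - β₁ᵗʰ - 2η)² - 4 η (β₁ᵗʰ + η))`,
which the threshold on `β₁` makes positive. -/

open Real

theorem exists_pos_roots_of_discrim_pos {a b c : ℝ} (ha : 0 < a) (hb : b < 0) (hc : 0 < c)
    (hd : 0 < discrim a b c) :
    ∃ x y : ℝ, 0 < x ∧ x < y ∧ a * x ^ 2 + b * x + c = 0 ∧ a * y ^ 2 + b * y + c = 0 := by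
  set s := √(discrim a b c)
  have hs_pos : 0 < s := sqrt_pos.mpr hd
  have hs_sq : discrim a b c = s * s := (mul_self_sqrt hd.le).symm
  have hs_lt : s < -b := by
    rw [sqrt_lt' (by linarith), discrim]
    nlinarith
  have hroot (x : ℝ) :
      a * x ^ 2 + b * x + c = 0 ↔ x = (-b + s) / (2 * a) ∨ x = (-b - s) / (2 * a) := by
    rw [sq, quadratic_eq_zero_iff ha.ne' hs_sq]
  refine ⟨(-b - s) / (2 * a), (-b + s) / (2 * a), by apply div_pos <;> linarith, ?_,
    (hroot _).mpr (.inr rfl), (hroot _).mpr (.inl rfl)⟩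
  gcongr
  linarith

theorem four_mul_lt_sq_sub_of_gt_add_two_sqrt {x p η : ℝ}
    (h : x > p + 2 * η + 2 * √(η * (p + η))) : 4 * η * x < (x - p) ^ 2 := by
  have hpos : 0 < (x - p - 2 * η) / 2 := by linarith [sqrt_nonneg (η * (p + η))]
  have hsq : η * (p + η) < ((x - p - 2 * η) / 2) ^ 2 := (sqrt_lt' hpos).mp (by linarith)
  nlinarith

theorem two_positive_roots_general
    (rN β1 rA KA β3 : ℝ)
    (hrN : 0 < rN) (hβ1 : 0 < β1) (hrA : 0 < rA) (hKA : 0 < KA)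
    (lA β1th β3th η a b c : ℝ)
    (hlApos : 0 < lA)
    (hη : η = rA * rN * (β3 - β3th) / (KA * lA ^ 2))
    (ha : a = β1 * rA / KA)
    (hb : b = lA * (β1th - β1))
    (hc : c = rN * (β3 - β3th))
    (h3 : β3 > β3th)
    (h1 : β1 > β1th + 2 * η + 2 * Real.sqrt (η * (β1th + η))) :
    ∃ A1 A2 : ℝ, 0 < A1 ∧ A1 < A2 ∧
      a * A1 ^ 2 + b * A1 + c = 0 ∧ a * A2 ^ 2 + b * A2 + c = 0 := by
  have hβ3 : 0 < β3 - β3th := sub_pos.mpr h3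
  have hη_pos : 0 < η := by rw [hη]; positivity
  have hβ1_gt : β1th < β1 := by linarith [sqrt_nonneg (η * (β1th + η))]
  have hac : a * c = η * β1 * lA ^ 2 := by
    rw [ha, hc, hη]
    field_simp
  have hdiscrim : discrim a b c = lA ^ 2 * ((β1 - β1th) ^ 2 - 4 * η * β1) := by
    rw [discrim, hb]
    linear_combination (-4) * hac
  refine exists_pos_roots_of_discrim_pos (by rw [ha]; positivity) ?_ (by rw [hc]; positivity) ?_
  · rw [hb]
    exact mul_neg_of_pos_of_neg hlApos (by linarith)
  · rw [hdiscrim]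
    exact mul_pos (by positivity) (sub_pos.mpr (four_mul_lt_sq_sub_of_gt_add_two_sqrt h1))

theorem two_positive_roots
    (rN μN β1 rA KA β3 μA εA : ℝ)
    (hrN : 0 < rN) (hμN : 0 < μN) (hβ1 : 0 < β1) (hrA : 0 < rA)
    (hKA : 0 < KA) (hβ3 : 0 < β3) (hμA : 0 < μA) (hεA : 0 < εA)
    (lA β1th β3th η a b c : ℝ)
    (hlA : lA = rA - (μA + εA)) (hlApos : 0 < lA)
    (hβ1th : β1th = μN * rA / (lA * KA))
    (hβ3th : β3th = μN * lA / rN)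
    (hη : η = rA * rN * (β3 - β3th) / (KA * lA ^ 2))
    (ha : a = β1 * rA / KA)
    (hb : b = lA * (β1th - β1))
    (hc : c = rN * (β3 - β3th))
    (h3 : β3 > β3th)
    (h1 : β1 > β1th + 2 * η + 2 * Real.sqrt (η * (β1th + η))) :
    ∃ A1 A2 : ℝ, 0 < A1 ∧ A1 < A2 ∧
      a * A1 ^ 2 + b * A1 + c = 0 ∧ a * A2 ^ 2 + b * A2 + c = 0 :=
  two_positive_roots_general rN β1 rA KA β3 hrN hβ1 hrA hKA lA β1th β3th η a b c hlApos hη ha hb hc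
    h3 h1
end

section
/- If β3 > β3^th and β1 < β1^th + 2η + 2√(η(β1^th + η)), then the quadratic a A² + b A + c = 0 with a = β1 r_A/K_A, b = l_A(β1^th - β1), c = r_N(β3 - β3^th) has no positive real root; hence the only nonnegative equilibrium of the system is P0. -/
set_option maxHeartbeats 1000000

theorem no_positive_root
    (rN μN β1 rA KA β3 μA εA : ℝ)
    (hrN : 0 < rN) (hμN : 0 < μN) (hβ1 : 0 < β1) (hrA : 0 < rA)
    (hKA : 0 < KA) (hβ3 : 0 < β3) (hμA : 0 < μA) (hεA : 0 < εA)
    (lA β1th β3th η a b c : ℝ)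
    (hlA : lA = rA - (μA + εA)) (hlApos : 0 < lA)
    (hβ1th : β1th = μN * rA / (lA * KA))
    (hβ3th : β3th = μN * lA / rN)
    (hη : η = rA * rN * (β3 - β3th) / (KA * lA ^ 2))
    (ha : a = β1 * rA / KA)
    (hb : b = lA * (β1th - β1))
    (hc : c = rN * (β3 - β3th))
    (h3 : β3 > β3th)
    (h1 : β1 < β1th + 2 * η + 2 * Real.sqrt (η * (β1th + η))) :
    (∀ A : ℝ, 0 < A → a * A ^ 2 + b * A + c ≠ 0) ∧
    (∀ N A : ℝ, 0 ≤ N → 0 ≤ A →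
      (rN - μN * N - β1 * N * A = 0) →
      (rA * A * (1 - A / KA) - β3 * N * A - (μA + εA) * A = 0) →
      N = rN / μN ∧ A = 0) := by
  have hapos : 0 < a := by rw [ha]; positivity
  have hcpos : 0 < c := by rw [hc]; nlinarith
  have hηpos : 0 < η := by
    rw [hη]; apply div_pos; nlinarith; positivity
  have hβ1thpos : 0 < β1th := by rw [hβ1th]; positivity
  set s := Real.sqrt (η * (β1th + η)) with hs
  have hs2 : s ^ 2 = η * (β1th + η) := Real.sq_sqrt (by positivity)
  have hsge : η ≤ s := by
    nlinarith [Real.sqrt_nonneg (η * (β1th + η)), hs2]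
  have key : ∀ A : ℝ, 0 < A → 0 < a * A ^ 2 + b * A + c := by
    intro A hA
    rcases le_or_gt 0 b with hb0 | hb0
    · nlinarith
    · -- b < 0, so β1 > β1th; discriminant negative
      have hβ1gt : β1th < β1 := by
        rw [hb] at hb0; nlinarith
      have hdisc : b ^ 2 < 4 * a * c := by
        have hac : 4 * a * c = 4 * β1 * η * lA ^ 2 := by
          rw [ha, hc, hη]; field_simp
        have hbb : b ^ 2 = lA ^ 2 * (β1 - β1th) ^ 2 := by rw [hb]; ring
        have hfac : (β1 - (β1th + 2*η - 2*s)) * (β1 - (β1th + 2*η + 2*s)) < 0 := by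
          apply mul_neg_of_pos_of_neg
          · linarith
          · linarith
        have hid : (β1 - β1th) ^ 2 - 4 * η * β1 =
            (β1 - (β1th + 2*η - 2*s)) * (β1 - (β1th + 2*η + 2*s)) := by
          linear_combination 4 * hs2
        have hneg : (β1 - β1th) ^ 2 - 4 * η * β1 < 0 := by rw [hid]; exact hfac
        rw [hbb, hac]
        nlinarith [mul_pos hlApos hlApos, hneg]
      nlinarith [sq_nonneg (2 * a * A + b)]
  constructor
  · exact fun A hA => ne_of_gt (key A hA)
  · intro N A hN hA e1 e2
    have hKA' : KA ≠ 0 := hKA.ne'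
    rcases eq_or_lt_of_le hA with hA0 | hA0
    · subst hA0
      refine ⟨?_, rfl⟩
      field_simp
      linear_combination -e1
    · exfalso
      have hdiv : KA * (A / KA) = A := by field_simp
      have e2d : rA*A*KA - rA*A*A - β3*N*A*KA - (μA+εA)*A*KA = 0 := by
        linear_combination KA * e2 + rA * A * hdiv
      have h0 : A * (lA*KA - rA*A - β3*N*KA) = 0 := by
        rw [hlA]; linear_combination e2d
      have e2'' : lA*KA - rA*A - β3*N*KA = 0 :=
        (mul_eq_zero.mp h0).resolve_left hA0.ne'
      have ha' : a * KA = β1 * rA := by rw [ha]; field_simp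
      have hb' : b * KA = μN * rA - lA * β1 * KA := by
        rw [hb, hβ1th]; field_simp
      have hc' : c = rN * β3 - μN * lA := by
        rw [hc, hβ3th]; field_simp
      have hKey : β1*rA*A^2 + (μN*rA - lA*β1*KA)*A + KA*rN*β3 - KA*μN*lA = 0 := by
        linear_combination β3*KA*e1 - (μN + β1*A)*e2''
      have hmul : KA * (a * A ^ 2 + b * A + c) = 0 := by
        linear_combination A^2*ha' + A*hb' + KA*hc' + hKey
      have heq : a * A ^ 2 + b * A + c = 0 :=
        (mul_eq_zero.mp hmul).resolve_left hKA'
      exact absurd heq (ne_of_gt (key A hA0))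
end

section
/- On the open first quadrant {(N, A) : N > 0, A > 0}, the divergence of the scaled vector field (1/(N A))·(F₁, F₂), where F₁ = r_N - μ_N N - β1 N A and F₂ = r_A A(1 - A/K_A) - β3 N A - (μ_A+ε_A)A, equals -(r_A N A + K_A r_N)/(K_A A N²), which is strictly negative. Consequently (by the Dulac criterion), the system has no periodic orbits in the open first quadrant. -/
theorem dulac_divergence_negative
    (rN μN β1 rA KA β3 μA εA : ℝ)
    (hrN : 0 < rN) (hμN : 0 < μN) (hβ1 : 0 < β1) (hrA : 0 < rA)
    (hKA : 0 < KA) (hβ3 : 0 < β3) (hμA : 0 < μA) (hεA : 0 < εA) :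
    ∀ N A : ℝ, 0 < N → 0 < A →
      deriv (fun n : ℝ => (rN - μN * n - β1 * n * A) / (n * A)) N
        + deriv (fun a : ℝ =>
            (rA * a * (1 - a / KA) - β3 * N * a - (μA + εA) * a) / (N * a)) A
        = -(rA * N * A + KA * rN) / (KA * A * N ^ 2) ∧
      -(rA * N * A + KA * rN) / (KA * A * N ^ 2) < 0 := by
  intro N A hN hA
  have hNe : N ≠ 0 := hN.ne'
  have hAe : A ≠ 0 := hA.ne'
  have hKe : KA ≠ 0 := hKA.ne'
  have h1 : deriv (fun n : ℝ => (rN - μN * n - β1 * n * A) / (n * A)) N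
      = -(rN / A) / N ^ 2 := by
    have heq : (fun n : ℝ => (rN - μN * n - β1 * n * A) / (n * A))
        =ᶠ[nhds N] (fun n : ℝ => (rN / A) * n⁻¹ - (μN / A + β1)) := by
      filter_upwards [eventually_gt_nhds hN] with n hn
      field_simp
      ring
    rw [heq.deriv_eq]
    have : HasDerivAt (fun n : ℝ => (rN / A) * n⁻¹ - (μN / A + β1))
        ((rN / A) * (-(N ^ 2)⁻¹)) N := by
      simpa using ((hasDerivAt_inv hNe).const_mul (rN / A)).sub_const (μN / A + β1)
    rw [this.deriv]; field_simp
  have h2 : deriv (fun a : ℝ =>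
      (rA * a * (1 - a / KA) - β3 * N * a - (μA + εA) * a) / (N * a)) A
      = -(rA / (N * KA)) := by
    have heq : (fun a : ℝ =>
        (rA * a * (1 - a / KA) - β3 * N * a - (μA + εA) * a) / (N * a))
        =ᶠ[nhds A] (fun a : ℝ =>
          -(rA / (N * KA)) * a + (rA / N - β3 - (μA + εA) / N)) := by
      filter_upwards [eventually_gt_nhds hA] with a ha
      field_simp
      ring
    rw [heq.deriv_eq]
    have : HasDerivAt (fun a : ℝ =>
        -(rA / (N * KA)) * a + (rA / N - β3 - (μA + εA) / N))
        (-(rA / (N * KA)) * 1) A := by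
      simpa using ((hasDerivAt_id A).const_mul (-(rA / (N * KA)))).add_const (rA / N - β3 - (μA + εA) / N)
    rw [this.deriv]; ring
  constructor
  · rw [h1, h2]; field_simp; ring
  · apply div_neg_of_neg_of_pos
    · nlinarith [mul_pos (mul_pos hrA hN) hA, mul_pos hKA hrN]
    · positivity
end

section
/- Let A_2 = (-b + √(b² - 4ac))/(2a) with a = β1 r_A/K_A, b = l_A(β1^th - β1), c = r_N(β3 - β3^th), under conditions ensuring A_2 is real and positive (e.g., β3 < β3^th). Then A_2 < l_A K_A / r_A, i.e., the tumor equilibrium lies below the effective carrying capacity. -/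
theorem A2_below_carrying_capacity
    (rN μN β1 rA KA β3 μA εA : ℝ)
    (hrN : 0 < rN) (hμN : 0 < μN) (hβ1 : 0 < β1) (hrA : 0 < rA)
    (hKA : 0 < KA) (hβ3 : 0 < β3) (hμA : 0 < μA) (hεA : 0 < εA)
    (lA β1th β3th a b c A2 : ℝ)
    (hlA : lA = rA - (μA + εA)) (hlApos : 0 < lA)
    (hβ1th : β1th = μN * rA / (lA * KA))
    (hβ3th : β3th = μN * lA / rN)
    (ha : a = β1 * rA / KA)
    (hb : b = lA * (β1th - β1))
    (hc : c = rN * (β3 - β3th))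
    (h3 : β3 < β3th)
    (hA2 : A2 = (-b + Real.sqrt (b ^ 2 - 4 * a * c)) / (2 * a)) :
    0 < A2 ∧ A2 < lA * KA / rA := by
  have hapos : 0 < a := by rw [ha]; positivity
  have hcneg : c < 0 := by rw [hc]; nlinarith
  have hdisc : 0 < b ^ 2 - 4 * a * c := by nlinarith [sq_nonneg b]
  set s := Real.sqrt (b ^ 2 - 4 * a * c) with hs
  have hs0 : 0 ≤ s := Real.sqrt_nonneg _
  have hs2 : s ^ 2 = b ^ 2 - 4 * a * c := Real.sq_sqrt hdisc.le
  have hsb : b < s := by nlinarith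
  set M := lA * KA / rA with hM
  have hMpos : 0 < M := by rw [hM]; positivity
  have hkey : a * M ^ 2 + b * M + c = rN * β3 := by
    rw [ha, hb, hc, hM, hβ1th, hβ3th]
    field_simp
    ring
  have hT : 0 < 2 * a * M + b := by
    rw [ha, hb, hM, hβ1th]
    have h1 : 2 * (β1 * rA / KA) * (lA * KA / rA) = 2 * β1 * lA := by
      field_simp
    rw [h1]
    have h2 : 0 < μN * rA / (lA * KA) := by positivity
    nlinarith
  have hsT : s < 2 * a * M + b := by
    rw [hs]
    rw [show Real.sqrt (b ^ 2 - 4 * a * c) < 2 * a * M + b ↔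
        b ^ 2 - 4 * a * c < (2 * a * M + b) ^ 2 from Real.sqrt_lt' hT]
    nlinarith [hkey, hapos, mul_pos hrN hβ3]
  constructor
  · rw [hA2]
    apply div_pos (by linarith) (by linarith)
  · rw [hA2, div_lt_iff₀ (by linarith : (0:ℝ) < 2 * a)]
    show -b + s < M * (2 * a)
    linarith [hsT]
end
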